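/- arXiv:1610.00356 — 2 statements merged into one kernel-verified Lean document; each statement's English description precedes it below -/
import Mathlib

section
/- Let n be a nonzero integer and γ a nonzero complex number such that ρ = -n/γ satisfies both the off-diagonal constraint n·ρ = 4γ(|n|/2 + s)² for some nonnegative integer s, and then automatically ρ² = -(|n|+2r)² with r = s; conclude γ = ±i·p/q for nonzero integers p, q with |p| ≤ |q|. -/
open Complex

lemma aux_c_ne (n : ℤ) (hn : n ≠ 0) (s : ℕ) :
    (((|n| : ℤ) : ℂ) + 2 * (s : ℂ)) ≠ 0 := by
  have h : ((|n| : ℤ) : ℂ) + 2 * (s : ℂ) = ((|n| + 2 * (s : ℤ) : ℤ) : ℂ) := by push_cast; ring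
  rw [h]
  exact Int.cast_ne_zero.mpr (by positivity)

lemma aux_gsq (n : ℤ) (hn : n ≠ 0) (γ : ℂ) (hγ : γ ≠ 0) (s : ℕ)
    (h : (n : ℂ) * (-(n : ℂ) / γ) = 4 * γ * (((|n| : ℤ) : ℂ) / 2 + (s : ℂ)) ^ 2) :
    γ ^ 2 * (((|n| : ℤ) : ℂ) + 2 * (s : ℂ)) ^ 2 = -(n : ℂ) ^ 2 := by
  field_simp at h
  linear_combination -h/4

theorem main_theorem_second_series_direction (n : ℤ) (hn : n ≠ 0) (γ : ℂ) (hγ : γ ≠ 0)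
    (ρ : ℂ) (hρ : ρ = -(n : ℂ) / γ)
    (hoff : ∃ s : ℕ, (n : ℂ) * ρ = 4 * γ * (((|n| : ℤ) : ℂ) / 2 + (s : ℂ)) ^ 2) :
    (∀ s : ℕ, (n : ℂ) * ρ = 4 * γ * (((|n| : ℤ) : ℂ) / 2 + (s : ℂ)) ^ 2 →
      ρ ^ 2 = -(((|n| : ℤ) : ℂ) + 2 * (s : ℂ)) ^ 2) ∧
    (∃ r : ℕ, ρ ^ 2 = -(((|n| : ℤ) : ℂ) + 2 * (r : ℂ)) ^ 2) ∧
    ∃ p q : ℤ, p ≠ 0 ∧ q ≠ 0 ∧ |p| ≤ |q| ∧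
      (γ = Complex.I * (p : ℂ) / (q : ℂ) ∨ γ = -(Complex.I * (p : ℂ) / (q : ℂ))) := by
  have hnC : (n : ℂ) ≠ 0 := Int.cast_ne_zero.mpr hn
  subst hρ
  have key : ∀ s : ℕ, (n : ℂ) * (-(n : ℂ) / γ) = 4 * γ * (((|n| : ℤ) : ℂ) / 2 + (s : ℂ)) ^ 2 →
      (-(n : ℂ) / γ) ^ 2 = -(((|n| : ℤ) : ℂ) + 2 * (s : ℂ)) ^ 2 := by
    intro s hs
    have hg := aux_gsq n hn γ hγ s hs
    have hg2 : γ ^ 2 ≠ 0 := pow_ne_zero 2 hγ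
    rw [show (-(n:ℂ)/γ)^2 = (n:ℂ)^2/γ^2 from by ring, div_eq_iff hg2]
    linear_combination hg
  obtain ⟨s, hs⟩ := hoff
  refine ⟨key, ⟨s, key s hs⟩, n, |n| + 2 * s, hn, by positivity, ?_, ?_⟩
  · have h0 : (0:ℤ) ≤ 2 * (s:ℤ) := by positivity
    calc |n| ≤ |n| + 2 * (s:ℤ) := by linarith
      _ ≤ |(|n| + 2 * (s:ℤ))| := le_abs_self _
  · have hg := aux_gsq n hn γ hγ s hs
    set c : ℂ := ((|n| : ℤ) : ℂ) + 2 * (s : ℂ) with hc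
    have hcq : ((|n| + 2 * (s:ℤ) : ℤ) : ℂ) = c := by push_cast [hc]; ring
    have hcne : c ≠ 0 := aux_c_ne n hn s
    have hfac : (γ - Complex.I * (n : ℂ) / c) * (γ + Complex.I * (n : ℂ) / c) = 0 := by
      have hI : Complex.I ^ 2 = -1 := Complex.I_sq
      field_simp
      linear_combination hg - (n:ℂ)^2 * hI
    rcases mul_eq_zero.mp hfac with h | h
    · left; rw [hcq]; linear_combination h
    · right; rw [hcq]; linear_combination h
end

section
/- Let γ be a nonzero complex number. There exist a nonzero integer n, a complex number ρ with (ρ = n·γ or ρ = -n/γ), a nonnegative integer s with n·ρ = 4γ(|n|/2+s)², and a nonnegative integer r with ρ² = -(|n|+2r)², if and only if γ = i·p/q for some nonzero integers p, q. -/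
/-!
Both branches of the diagonal constraint force `γ ^ 2 * b ^ 2 = -a ^ 2` for positive integers `a, b`:
for `ρ = n γ` the Naimark condition gives `n ^ 2 γ ^ 2 = -(|n| + 2 r) ^ 2`, and for `ρ = -n / γ` the
off-diagonal constraint gives `(|n| + 2 s) ^ 2 γ ^ 2 = -n ^ 2`. Conversely, from `γ = ± i a / b` take
`n = 2 b, ρ = n γ, s = 0, r = a - b` when `b ≤ a`, and `n = 2 a, ρ = -n / γ, r = s = b - a` otherwise.
-/

open Complex

def HasSimplicitySolution (γ : ℂ) : Prop :=
  ∃ n : ℤ, n ≠ 0 ∧ ∃ ρ : ℂ,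
    (ρ = (n : ℂ) * γ ∨ ρ = -(n : ℂ) / γ) ∧
    (∃ s : ℕ, (n : ℂ) * ρ = 4 * γ * (((|n| : ℤ) : ℂ) / 2 + (s : ℂ)) ^ 2) ∧
    (∃ r : ℕ, ρ ^ 2 = -(((|n| : ℤ) : ℂ) + 2 * (r : ℂ)) ^ 2)

lemma Int.cast_natAbs_sq {α : Type*} [Ring α] (n : ℤ) : ((n.natAbs : ℕ) : α) ^ 2 = (n : α) ^ 2 := by
  rw [Nat.cast_natAbs, ← Int.cast_pow, sq_abs, Int.cast_pow]

lemma exists_eq_I_mul_div_iff_sq_mul_sq_eq_neg_sq (γ : ℂ) :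
    (∃ p q : ℤ, p ≠ 0 ∧ q ≠ 0 ∧ γ = I * p / q) ↔
      ∃ a b : ℕ, 0 < a ∧ 0 < b ∧ γ ^ 2 * b ^ 2 = -a ^ 2 := by
  constructor
  · rintro ⟨p, q, hp, hq, rfl⟩
    refine ⟨p.natAbs, q.natAbs, Int.natAbs_pos.2 hp, Int.natAbs_pos.2 hq, ?_⟩
    have hqC : (q : ℂ) ≠ 0 := Int.cast_ne_zero.2 hq
    rw [Int.cast_natAbs_sq, Int.cast_natAbs_sq, div_pow, mul_pow, I_sq]
    field_simp
  · rintro ⟨a, b, ha, hb, h⟩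
    have hbC : (b : ℂ) ≠ 0 := Nat.cast_ne_zero.2 hb.ne'
    have hsq : (γ * b) ^ 2 = (I * a) ^ 2 := by linear_combination h - (a : ℂ) ^ 2 * I_sq
    rcases sq_eq_sq_iff_eq_or_eq_neg.1 hsq with h' | h'
    · exact ⟨a, b, by omega, by omega, by push_cast; field_simp; linear_combination h'⟩
    · exact ⟨-a, b, by omega, by omega, by push_cast; field_simp; linear_combination h'⟩

lemma HasSimplicitySolution.exists_sq_mul_sq_eq_neg_sq {γ : ℂ} (h : HasSimplicitySolution γ) :
    ∃ a b : ℕ, 0 < a ∧ 0 < b ∧ γ ^ 2 * b ^ 2 = -a ^ 2 := by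
  obtain ⟨n, hn, ρ, hρ, ⟨s, hs⟩, ⟨r, hr⟩⟩ := h
  have hn' : 0 < n.natAbs := Int.natAbs_pos.2 hn
  rw [← Nat.cast_natAbs] at hs hr
  rcases hρ with rfl | rfl
  · refine ⟨n.natAbs + 2 * r, n.natAbs, by omega, hn', ?_⟩
    rw [Int.cast_natAbs_sq]
    push_cast
    linear_combination hr
  · have hγ : γ ≠ 0 := by
      rintro rfl
      have : ((n.natAbs + 2 * r : ℕ) : ℂ) ≠ 0 := Nat.cast_ne_zero.2 (by omega)
      apply this
      push_cast
      simpa using hr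
    refine ⟨n.natAbs, n.natAbs + 2 * s, hn', by omega, ?_⟩
    rw [Int.cast_natAbs_sq]
    field_simp at hs
    push_cast
    linear_combination -hs / 4

lemma hasSimplicitySolution_of_sq_mul_sq_eq_neg_sq {γ : ℂ} {a b : ℕ} (ha : 0 < a) (hb : 0 < b)
    (h : γ ^ 2 * b ^ 2 = -a ^ 2) : HasSimplicitySolution γ := by
  rcases le_or_gt b a with hba | hab
  · obtain ⟨r, rfl⟩ := Nat.exists_eq_add_of_le hba
    refine ⟨2 * b, by omega, 2 * b * γ, Or.inl (by push_cast; ring), ⟨0, ?_⟩, ⟨r, ?_⟩⟩ <;>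
      rw [abs_of_nonneg (by positivity : (0 : ℤ) ≤ 2 * b)] <;> push_cast at h ⊢
    · ring
    · linear_combination 4 * h
  · obtain ⟨s, rfl⟩ := Nat.exists_eq_add_of_le hab.le
    have hγ : γ ≠ 0 := by
      rintro rfl
      have : (a : ℂ) ≠ 0 := Nat.cast_ne_zero.2 ha.ne'
      apply this
      simpa using h.symm
    refine ⟨2 * a, by omega, -(2 * a) / γ, Or.inr (by push_cast; ring), ⟨s, ?_⟩, ⟨s, ?_⟩⟩ <;>
      rw [abs_of_nonneg (by positivity : (0 : ℤ) ≤ 2 * a)] <;> push_cast at h ⊢ <;> field_simp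
    · linear_combination -4 * h
    · linear_combination h

theorem main_theorem_general (γ : ℂ) :
    (∃ n : ℤ, n ≠ 0 ∧ ∃ ρ : ℂ,
      (ρ = (n : ℂ) * γ ∨ ρ = -(n : ℂ) / γ) ∧
      (∃ s : ℕ, (n : ℂ) * ρ = 4 * γ * (((|n| : ℤ) : ℂ) / 2 + (s : ℂ)) ^ 2) ∧
      (∃ r : ℕ, ρ ^ 2 = -(((|n| : ℤ) : ℂ) + 2 * (r : ℂ)) ^ 2)) ↔
    ∃ p q : ℤ, p ≠ 0 ∧ q ≠ 0 ∧ γ = Complex.I * (p : ℂ) / (q : ℂ) := by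
  show HasSimplicitySolution γ ↔ _
  rw [exists_eq_I_mul_div_iff_sq_mul_sq_eq_neg_sq]
  exact ⟨HasSimplicitySolution.exists_sq_mul_sq_eq_neg_sq,
    fun ⟨_, _, ha, hb, h⟩ => hasSimplicitySolution_of_sq_mul_sq_eq_neg_sq ha hb h⟩

theorem main_theorem (γ : ℂ) (hγ : γ ≠ 0) :
    (∃ n : ℤ, n ≠ 0 ∧ ∃ ρ : ℂ,
      (ρ = (n : ℂ) * γ ∨ ρ = -(n : ℂ) / γ) ∧
      (∃ s : ℕ, (n : ℂ) * ρ = 4 * γ * (((|n| : ℤ) : ℂ) / 2 + (s : ℂ)) ^ 2) ∧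
      (∃ r : ℕ, ρ ^ 2 = -(((|n| : ℤ) : ℂ) + 2 * (r : ℂ)) ^ 2)) ↔
    ∃ p q : ℤ, p ≠ 0 ∧ q ≠ 0 ∧ γ = Complex.I * (p : ℂ) / (q : ℂ) :=
  main_theorem_general γ
end
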